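/- Let G be a finite simple graph on {1,…,n}, k a field of characteristic p > 0, and S = k[X_1,…,X_n,Y_1,…,Y_n]. For a permutation (v_1,…,v_n) of (1,…,n) set F(v) := (Y_{v_1} · [v_1,v_2] · [v_2,v_3] ⋯ [v_{n−1},v_n] · X_{v_n})^{p−1}. If {v_t, v_{t+1}} ∈ E(G) for some 1 ≤ t ≤ n−1, and w is the permutation obtained from v by swapping the entries v_t and v_{t+1}, then F(v) ≡ F(w) modulo J_G^{[p]}, i.e., F(v) − F(w) ∈ J_G^{[p]}. -/
import Mathlib


open MvPolynomial

variable (K : Type*) [Field K]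

/-- The variable `X_i` of `S = k[X_1, …, X_n, Y_1, …, Y_n]`. -/
noncomputable def Xv {n : ℕ} (i : Fin n) : MvPolynomial (Fin n ⊕ Fin n) K :=
  MvPolynomial.X (Sum.inl i)

/-- The variable `Y_i` of `S = k[X_1, …, X_n, Y_1, …, Y_n]`. -/
noncomputable def Yv {n : ℕ} (i : Fin n) : MvPolynomial (Fin n ⊕ Fin n) K :=
  MvPolynomial.X (Sum.inr i)

/-- The binomial `[i, j] = X_i Y_j - X_j Y_i`. -/
noncomputable def brkt {n : ℕ} (i j : Fin n) : MvPolynomial (Fin n ⊕ Fin n) K :=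
  Xv K i * Yv K j - Xv K j * Yv K i

/-- The binomial edge ideal `J_G = ([i, j] : {i, j} ∈ E(G))`. -/
noncomputable def binomialEdgeIdeal {n : ℕ} (G : SimpleGraph (Fin n)) :
    Ideal (MvPolynomial (Fin n ⊕ Fin n) K) :=
  Ideal.span {f | ∃ i j : Fin n, G.Adj i j ∧ f = brkt K i j}

/-- The `p`-th Frobenius power `I^{[p]}` of an ideal `I`, generated by `{f^p : f ∈ I}`. -/
def frobeniusPower {R : Type*} [CommRing R] (p : ℕ) (I : Ideal R) : Ideal R :=
  Ideal.span ((fun f => f ^ p) '' (I : Set R))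

/-- `F(v) = (Y_{v_1} [v_1,v_2] [v_2,v_3] ⋯ [v_{n-1},v_n] X_{v_n})^{p-1}`. -/
noncomputable def Fpoly {n : ℕ} (p : ℕ) (v : Fin n → Fin n) (hn : 0 < n) :
    MvPolynomial (Fin n ⊕ Fin n) K :=
  (Yv K (v ⟨0, hn⟩) *
      (∏ t : Fin (n - 1),
        brkt K (v ⟨t, by have := t.isLt; omega⟩) (v ⟨(t : ℕ) + 1, by have := t.isLt; omega⟩)) *
      Xv K (v ⟨n - 1, by omega⟩)) ^ (p - 1)

-- ### auxiliary development

lemma brkt_anti {n : ℕ} (i j : Fin n) : brkt K i j = - brkt K j i := by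
  simp only [brkt]; ring

lemma neg_one_pow_pred {R : Type*} [CommRing R] (p : ℕ) (hp : p.Prime) [CharP R p] :
    (-1 : R) ^ (p - 1) = 1 := by
  rcases hp.eq_two_or_odd' with h2 | hodd
  · subst h2
    have h : (2 : R) = 0 := by exact_mod_cast CharP.cast_eq_zero R 2
    rw [show (2 - 1 : ℕ) = 1 from rfl, pow_one]
    linear_combination (-1 : R) * h
  · exact (Nat.Odd.sub_odd hodd odd_one).neg_one_pow

lemma key_pow {R : Type*} [CommRing R] (p : ℕ) (hp0 : 0 < p)
    (hneg : (-1 : R) ^ (p - 1) = 1) (g A B C R0 : R) (h : A - B = -(C * g)) :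
    ∃ D, (A * g * R0) ^ (p - 1) - (-(B * g * R0)) ^ (p - 1) = g ^ p * D := by
  obtain ⟨D0, hD0⟩ :=
    dvd_trans (⟨-C, by linear_combination h⟩ : g ∣ A - B) (sub_dvd_pow_sub_pow A B (p - 1))
  refine ⟨R0 ^ (p - 1) * D0, ?_⟩
  have hg : g ^ p = g ^ (p - 1) * g := by
    rw [← pow_succ]; congr 1; omega
  rw [neg_pow, hneg, one_mul, hg]
  linear_combination (g ^ (p - 1) * R0 ^ (p - 1)) * hD0

/-- totalized evaluation `v_s` -/
noncomputable def extF {n : ℕ} (hn : 0 < n) (vv : Fin n → Fin n) (s : ℕ) : Fin n :=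
  vv ⟨min s (n - 1), by omega⟩

lemma extF_eq {n : ℕ} (hn : 0 < n) (vv : Fin n → Fin n) (s : ℕ) (hs : s < n) :
    extF hn vv s = vv ⟨s, hs⟩ :=
  congrArg vv (Fin.ext (show min s (n - 1) = s by omega))

/-- the `s`-th factor of the chain `Y_{v_0} [v_0,v_1] ⋯ [v_{n-2},v_{n-1}] X_{v_{n-1}}` -/
noncomputable def Gf {n : ℕ} (hn : 0 < n) (vv : Fin n → Fin n) (s : ℕ) :
    MvPolynomial (Fin n ⊕ Fin n) K :=
  if s = 0 then Yv K (extF hn vv 0)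
  else if s = n then Xv K (extF hn vv (n - 1))
  else brkt K (extF hn vv (s - 1)) (extF hn vv s)

lemma Gf_zero {n : ℕ} (hn : 0 < n) (vv : Fin n → Fin n) :
    Gf K hn vv 0 = Yv K (extF hn vv 0) := if_pos rfl

lemma Gf_last {n : ℕ} (hn : 0 < n) (vv : Fin n → Fin n) :
    Gf K hn vv n = Xv K (extF hn vv (n - 1)) := by
  unfold Gf; rw [if_neg (by omega), if_pos rfl]

lemma Gf_mid {n : ℕ} (hn : 0 < n) (vv : Fin n → Fin n) (s : ℕ) (h1 : s ≠ 0) (h2 : s ≠ n) :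
    Gf K hn vv s = brkt K (extF hn vv (s - 1)) (extF hn vv s) := by
  unfold Gf; rw [if_neg h1, if_neg h2]

lemma Fpoly_eq_prod {n : ℕ} (p : ℕ) (hn : 0 < n) (vv : Fin n → Fin n) :
    Fpoly K p vv hn = (∏ s ∈ Finset.range (n + 1), Gf K hn vv s) ^ (p - 1) := by
  have h1 : ∏ s ∈ Finset.range (n + 1), Gf K hn vv s
      = (∏ s ∈ Finset.range n, Gf K hn vv s) * Gf K hn vv n := Finset.prod_range_succ _ _
  have hrn : Finset.range n = Finset.range ((n - 1) + 1) := by congr 1; omega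
  have h2 : ∏ s ∈ Finset.range n, Gf K hn vv s
      = (∏ s ∈ Finset.range (n - 1), Gf K hn vv (s + 1)) * Gf K hn vv 0 := by
    rw [hrn, Finset.prod_range_succ']
  have h3 : (∏ t : Fin (n - 1),
        brkt K (vv ⟨t, by have := t.isLt; omega⟩) (vv ⟨(t : ℕ) + 1, by have := t.isLt; omega⟩))
      = ∏ s ∈ Finset.range (n - 1), Gf K hn vv (s + 1) := by
    rw [← Fin.prod_univ_eq_prod_range (fun s => Gf K hn vv (s + 1)) (n - 1)]
    refine Finset.prod_congr rfl fun i _ => ?_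
    have hi := i.isLt
    rw [Gf_mid K hn vv ((i : ℕ) + 1) (by omega) (by omega)]
    rw [extF_eq hn vv ((i : ℕ) + 1 - 1) (by omega), extF_eq hn vv ((i : ℕ) + 1) (by omega)]
    congr 1
  rw [h1, h2, Gf_zero, Gf_last, ← h3, Fpoly,
    extF_eq hn vv 0 hn, extF_eq hn vv (n - 1) (by omega)]
  ring

lemma finish_lemma {n : ℕ} (G : SimpleGraph (Fin n)) (p : ℕ) (hp : p.Prime) [CharP K p]
    (hn : 0 < n) (v w : Fin n → Fin n) (g A B C R0 : MvPolynomial (Fin n ⊕ Fin n) K)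
    (hg : g ∈ binomialEdgeIdeal K G)
    (hv : Fpoly K p v hn = (A * g * R0) ^ (p - 1))
    (hw : Fpoly K p w hn = (-(B * g * R0)) ^ (p - 1))
    (hABC : A - B = -(C * g)) :
    Fpoly K p v hn - Fpoly K p w hn ∈ frobeniusPower p (binomialEdgeIdeal K G) := by
  obtain ⟨Dq, hDq⟩ := key_pow p hp.pos (neg_one_pow_pred p hp) g A B C R0 hABC
  rw [hv, hw, hDq]
  exact Ideal.mul_mem_right _ _ (Ideal.subset_span ⟨g, hg, rfl⟩)

lemma main_aux {n : ℕ} (G : SimpleGraph (Fin n)) (p : ℕ) (hp : p.Prime) [CharP K p]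
    (hn : 0 < n) (v w : Fin n → Fin n) (t : ℕ) (ht : t + 1 < n) (htn : t < n)
    (hvw : ∀ s (hs : s < n), s ≠ t → s ≠ t + 1 → w ⟨s, hs⟩ = v ⟨s, hs⟩)
    (hwt : w ⟨t, htn⟩ = v ⟨t + 1, ht⟩) (hwt1 : w ⟨t + 1, ht⟩ = v ⟨t, htn⟩)
    (hadj : G.Adj (v ⟨t, htn⟩) (v ⟨t + 1, ht⟩)) :
    Fpoly K p v hn - Fpoly K p w hn ∈ frobeniusPower p (binomialEdgeIdeal K G) := by
  classical
  have hext : ∀ s, s < n → s ≠ t → s ≠ t + 1 → extF hn w s = extF hn v s := by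
    intro s hs h1 h2
    rw [extF_eq hn w s hs, extF_eq hn v s hs]
    exact hvw s hs h1 h2
  have hext_t : extF hn w t = extF hn v (t + 1) := by
    rw [extF_eq hn w t htn, extF_eq hn v (t + 1) ht]; exact hwt
  have hext_t1 : extF hn w (t + 1) = extF hn v t := by
    rw [extF_eq hn w (t + 1) ht, extF_eq hn v t htn]; exact hwt1
  have hg_mem : brkt K (extF hn v t) (extF hn v (t + 1)) ∈ binomialEdgeIdeal K G :=
    Ideal.subset_span ⟨v ⟨t, htn⟩, v ⟨t + 1, ht⟩, hadj,
      by rw [extF_eq hn v t htn, extF_eq hn v (t + 1) ht]⟩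
  have hDsub : ({t, t + 1, t + 2} : Finset ℕ) ⊆ Finset.range (n + 1) := by
    intro s hs
    simp only [Finset.mem_insert, Finset.mem_singleton] at hs
    simp only [Finset.mem_range]; omega
  have hsplit : ∀ z : Fin n → Fin n,
      ∏ s ∈ Finset.range (n + 1), Gf K hn z s
        = (∏ s ∈ Finset.range (n + 1) \ ({t, t + 1, t + 2} : Finset ℕ), Gf K hn z s)
            * (Gf K hn z t * Gf K hn z (t + 1) * Gf K hn z (t + 2)) := by
    intro z
    rw [← Finset.prod_sdiff hDsub]
    congr 1
    rw [Finset.prod_insert (by simp), Finset.prod_insert (by simp), Finset.prod_singleton]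
    ring
  have hR0w : (∏ s ∈ Finset.range (n + 1) \ ({t, t + 1, t + 2} : Finset ℕ), Gf K hn w s)
      = ∏ s ∈ Finset.range (n + 1) \ ({t, t + 1, t + 2} : Finset ℕ), Gf K hn v s := by
    refine Finset.prod_congr rfl fun s hs => ?_
    simp only [Finset.mem_sdiff, Finset.mem_range, Finset.mem_insert,
      Finset.mem_singleton, not_or] at hs
    obtain ⟨hs1, hs2, hs3, hs4⟩ := hs
    by_cases h0 : s = 0
    · subst h0
      rw [Gf_zero, Gf_zero, hext 0 hn (by omega) (by omega)]
    · by_cases hsn : s = n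
      · rw [hsn, Gf_last, Gf_last, hext (n - 1) (by omega) (by omega) (by omega)]
      · rw [Gf_mid K hn w s h0 hsn, Gf_mid K hn v s h0 hsn,
          hext (s - 1) (by omega) (by omega) (by omega),
          hext s (by omega) (by omega) (by omega)]
  have hv1 : Gf K hn v (t + 1) = brkt K (extF hn v t) (extF hn v (t + 1)) :=
    Gf_mid K hn v (t + 1) (by omega) (by omega)
  have hw1 : Gf K hn w (t + 1) = -brkt K (extF hn v t) (extF hn v (t + 1)) := by
    rw [Gf_mid K hn w (t + 1) (by omega) (by omega), show t + 1 - 1 = t by omega,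
      hext_t, hext_t1, brkt_anti]
  rcases Nat.eq_zero_or_pos t with h0 | h0
  · -- t = 0
    have hvt : Gf K hn v t = Yv K (extF hn v t) := by subst h0; exact Gf_zero K hn v
    have hwt' : Gf K hn w t = Yv K (extF hn v (t + 1)) := by
      subst h0; rw [Gf_zero]; exact congrArg _ hext_t
    rcases eq_or_ne (t + 2) n with he | he
    · -- t + 2 = n
      have hvt2 : Gf K hn v (t + 2) = Xv K (extF hn v (t + 1)) := by
        subst he; rw [Gf_last, show t + 2 - 1 = t + 1 by omega]
      have hwt2 : Gf K hn w (t + 2) = Xv K (extF hn v t) := by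
        subst he; rw [Gf_last, show t + 2 - 1 = t + 1 by omega]
        exact congrArg _ hext_t1
      refine finish_lemma K G p hp hn v w (brkt K (extF hn v t) (extF hn v (t + 1)))
        (Yv K (extF hn v t) * Xv K (extF hn v (t + 1)))
        (Yv K (extF hn v (t + 1)) * Xv K (extF hn v t))
        1
        (∏ s ∈ Finset.range (n + 1) \ ({t, t + 1, t + 2} : Finset ℕ), Gf K hn v s)
        hg_mem ?_ ?_ ?_
      · rw [Fpoly_eq_prod, hsplit v, hvt, hv1, hvt2]; ring
      · rw [Fpoly_eq_prod, hsplit w, hR0w, hwt', hw1, hwt2]; ring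
      · simp only [brkt, Xv, Yv]; ring
    · -- t + 2 < n
      have hvt2 : Gf K hn v (t + 2) = brkt K (extF hn v (t + 1)) (extF hn v (t + 2)) :=
        Gf_mid K hn v (t + 2) (by omega) he
      have hwt2 : Gf K hn w (t + 2) = brkt K (extF hn v t) (extF hn v (t + 2)) := by
        rw [Gf_mid K hn w (t + 2) (by omega) he, show t + 2 - 1 = t + 1 by omega,
          hext_t1, hext (t + 2) (by omega) (by omega) (by omega)]
      refine finish_lemma K G p hp hn v w (brkt K (extF hn v t) (extF hn v (t + 1)))
        (Yv K (extF hn v t) * brkt K (extF hn v (t + 1)) (extF hn v (t + 2)))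
        (Yv K (extF hn v (t + 1)) * brkt K (extF hn v t) (extF hn v (t + 2)))
        (Yv K (extF hn v (t + 2)))
        (∏ s ∈ Finset.range (n + 1) \ ({t, t + 1, t + 2} : Finset ℕ), Gf K hn v s)
        hg_mem ?_ ?_ ?_
      · rw [Fpoly_eq_prod, hsplit v, hvt, hv1, hvt2]; ring
      · rw [Fpoly_eq_prod, hsplit w, hR0w, hwt', hw1, hwt2]; ring
      · simp only [brkt, Xv, Yv]; ring
  · -- t > 0
    have hvt : Gf K hn v t = brkt K (extF hn v (t - 1)) (extF hn v t) :=
      Gf_mid K hn v t (by omega) (by omega)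
    have hwt' : Gf K hn w t = brkt K (extF hn v (t - 1)) (extF hn v (t + 1)) := by
      rw [Gf_mid K hn w t (by omega) (by omega),
        hext (t - 1) (by omega) (by omega) (by omega), hext_t]
    rcases eq_or_ne (t + 2) n with he | he
    · have hvt2 : Gf K hn v (t + 2) = Xv K (extF hn v (t + 1)) := by
        subst he; rw [Gf_last, show t + 2 - 1 = t + 1 by omega]
      have hwt2 : Gf K hn w (t + 2) = Xv K (extF hn v t) := by
        subst he; rw [Gf_last, show t + 2 - 1 = t + 1 by omega]
        exact congrArg _ hext_t1
      refine finish_lemma K G p hp hn v w (brkt K (extF hn v t) (extF hn v (t + 1)))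
        (brkt K (extF hn v (t - 1)) (extF hn v t) * Xv K (extF hn v (t + 1)))
        (brkt K (extF hn v (t - 1)) (extF hn v (t + 1)) * Xv K (extF hn v t))
        (Xv K (extF hn v (t - 1)))
        (∏ s ∈ Finset.range (n + 1) \ ({t, t + 1, t + 2} : Finset ℕ), Gf K hn v s)
        hg_mem ?_ ?_ ?_
      · rw [Fpoly_eq_prod, hsplit v, hvt, hv1, hvt2]; ring
      · rw [Fpoly_eq_prod, hsplit w, hR0w, hwt', hw1, hwt2]; ring
      · simp only [brkt, Xv, Yv]; ring
    · have hvt2 : Gf K hn v (t + 2) = brkt K (extF hn v (t + 1)) (extF hn v (t + 2)) :=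
        Gf_mid K hn v (t + 2) (by omega) he
      have hwt2 : Gf K hn w (t + 2) = brkt K (extF hn v t) (extF hn v (t + 2)) := by
        rw [Gf_mid K hn w (t + 2) (by omega) he, show t + 2 - 1 = t + 1 by omega,
          hext_t1, hext (t + 2) (by omega) (by omega) (by omega)]
      refine finish_lemma K G p hp hn v w (brkt K (extF hn v t) (extF hn v (t + 1)))
        (brkt K (extF hn v (t - 1)) (extF hn v t) * brkt K (extF hn v (t + 1)) (extF hn v (t + 2)))
        (brkt K (extF hn v (t - 1)) (extF hn v (t + 1)) * brkt K (extF hn v t) (extF hn v (t + 2)))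
        (brkt K (extF hn v (t - 1)) (extF hn v (t + 2)))
        (∏ s ∈ Finset.range (n + 1) \ ({t, t + 1, t + 2} : Finset ℕ), Gf K hn v s)
        hg_mem ?_ ?_ ?_
      · rw [Fpoly_eq_prod, hsplit v, hvt, hv1, hvt2]; ring
      · rw [Fpoly_eq_prod, hsplit w, hR0w, hwt', hw1, hwt2]; ring
      · simp only [brkt, Xv, Yv]; ring

/-- If `{v_t, v_{t+1}} ∈ E(G)` and `w` is obtained from the permutation `v` by swapping the
entries at positions `t` and `t+1`, then `F(v) ≡ F(w)` modulo `J_G^{[p]}`. -/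
theorem Fpoly_swap_mem_frobeniusPower {n : ℕ} (G : SimpleGraph (Fin n))
    (p : ℕ) (hp : p.Prime) [CharP K p] (v : Equiv.Perm (Fin n))
    (t : ℕ) (ht : t + 1 < n)
    (hadj : G.Adj (v ⟨t, by omega⟩) (v ⟨t + 1, ht⟩)) :
    Fpoly K p v (by omega) -
        Fpoly K p (⇑v ∘ ⇑(Equiv.swap (⟨t, by omega⟩ : Fin n) ⟨t + 1, ht⟩)) (by omega) ∈
      frobeniusPower p (binomialEdgeIdeal K G) := by
  have htn : t < n := by omega
  refine main_aux K G p hp (by omega) (⇑v) _ t ht htn ?_ ?_ ?_ hadj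
  · intro s hs h1 h2
    simp only [Function.comp_apply]
    congr 1
    exact Equiv.swap_apply_of_ne_of_ne (Fin.ne_of_val_ne h1) (Fin.ne_of_val_ne h2)
  · simp only [Function.comp_apply]
    congr 1
    exact Equiv.swap_apply_left _ _
  · simp only [Function.comp_apply]
    congr 1
    exact Equiv.swap_apply_right _ _
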